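/- arXiv:1903.04351 — 5 statements merged into one kernel-verified Lean document; each statement's English description precedes it below -/
import Mathlib

section
/- Let Y ⊂ ℝ be a nonempty finite set with positive weights w : Y → ℝ₊, with weighted mean μ_w(Y) := (∑_{y∈Y} w(y)·y)/(∑_{y∈Y} w(y)) and weighted cumulative error δ_w(Y) := ∑_{y∈Y} w(y)·|y − μ_w(Y)|. Then for every z ∈ ℝ such that z ∉ (min Y, max Y) (i.e., z lies outside the open interval spanned by Y, so z is outside I(Y) := [min Y, max Y] or is one of its endpoints), it holds that δ_w(Y) ≤ 2·∑_{y∈Y} w(y)·|y − z|. -/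
/-- The weighted mean point of a finite set of reals. -/
noncomputable def wmean (Y : Finset ℝ) (w : ℝ → ℝ) : ℝ :=
  (∑ y ∈ Y, w y * y) / (∑ y ∈ Y, w y)

/-- The weighted cumulative error of a finite set of reals. -/
noncomputable def wdelta (Y : Finset ℝ) (w : ℝ → ℝ) : ℝ :=
  ∑ y ∈ Y, w y * |y - wmean Y w|

theorem stmt_2 (Y : Finset ℝ) (hY : Y.Nonempty) (w : ℝ → ℝ)
    (hw : ∀ y ∈ Y, 0 < w y) (z : ℝ)
    (hz : z ∉ Set.Ioo (Y.min' hY) (Y.max' hY)) :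
    wdelta Y w ≤ 2 * ∑ y ∈ Y, w y * |y - z| := by
  set μ := wmean Y w with hμ
  have hW : 0 < ∑ y ∈ Y, w y :=
    Finset.sum_pos hw hY
  have hμW : (∑ y ∈ Y, w y) * μ = ∑ y ∈ Y, w y * y := by
    rw [hμ, wmean, mul_div_cancel₀ _ hW.ne']
  have h1 : (∑ y ∈ Y, w y) * |μ - z| ≤ ∑ y ∈ Y, w y * |y - z| := by
    have : (∑ y ∈ Y, w y) * (μ - z) = ∑ y ∈ Y, w y * (y - z) := by
      rw [mul_sub, hμW, Finset.sum_mul, ← Finset.sum_sub_distrib]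
      exact Finset.sum_congr rfl fun y _ => by ring
    calc (∑ y ∈ Y, w y) * |μ - z| = |∑ y ∈ Y, w y * (y - z)| := by
          rw [← this, abs_mul, abs_of_pos hW]
      _ ≤ ∑ y ∈ Y, |w y * (y - z)| := Finset.abs_sum_le_sum_abs _ _
      _ = ∑ y ∈ Y, w y * |y - z| := by
          refine Finset.sum_congr rfl fun y hy => ?_
          rw [abs_mul, abs_of_pos (hw y hy)]
  have h2 : wdelta Y w ≤ ∑ y ∈ Y, w y * (|y - z| + |μ - z|) := by
    refine Finset.sum_le_sum fun y hy => ?_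
    have : |y - μ| ≤ |y - z| + |μ - z| := by
      have := abs_sub_le y z μ
      rw [abs_sub_comm z μ] at this
      linarith
    exact mul_le_mul_of_nonneg_left this (hw y hy).le
  have h3 : ∑ y ∈ Y, w y * (|y - z| + |μ - z|)
      = (∑ y ∈ Y, w y * |y - z|) + (∑ y ∈ Y, w y) * |μ - z| := by
    rw [Finset.sum_mul]
    rw [← Finset.sum_add_distrib]
    exact Finset.sum_congr rfl fun y _ => by ring
  linarith
end

section
/- Let X = (x_1, …, x_n) and Y = (y_1, …, y_n) be two sequences of real numbers, and for a sequence Z of n reals let top_p(Z) denote the sum of the p largest entries of Z (for p ∈ {1,…,n}). Then for every subset S ⊆ {1,…,n} and every p ∈ {1,…,n}: |top_p(X) − top_p(Y)| ≤ p·max_{i∈S} |x_i − y_i| + ∑_{i∈{1,…,n}∖S} |x_i − y_i| (where the maximum over an empty S is taken to be 0). -/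
/-- `topP p s` is the sum of the `p` largest entries of the multiset `s` of reals
(entries sorted in nonincreasing order, first `p` taken). -/
noncomputable def topP (p : ℕ) (s : Multiset ℝ) : ℝ :=
  (((s.sort (· ≤ ·)).reverse).take p).sum

/-!
If `T` is a set of `p` indices on which `x` attains `top_p(X)`, then `top_p(Y) ≥ ∑_{i ∈ T} y_i`,
since `top_p` dominates the sum over any `p` entries. Hence
`top_p(X) - top_p(Y) ≤ ∑_{i ∈ T} |x_i - y_i|`, and the terms with `i ∈ S` (at most `p` of them)
are each bounded by the maximum over `S`, the others by their sum over the complement of `S`.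
-/

theorem Multiset.exists_le_map_eq {α β : Type*} {f : α → β} {s : Multiset α}
    {t : Multiset β} (h : t ≤ s.map f) : ∃ u ≤ s, u.map f = t := by
  induction s using Quotient.inductionOn
  induction t using Quotient.inductionOn
  obtain ⟨t', hperm, hsub⟩ := h
  obtain ⟨u, hu, rfl⟩ := List.sublist_map_iff.mp hsub
  exact ⟨u, hu.subperm, Multiset.coe_eq_coe.2 hperm⟩

section SortedSums

variable {α : Type*} [AddCommMonoid α] [LinearOrder α] [IsOrderedAddMonoid α]

theorem List.sum_take_le_sum_take_cons {a : α} {l : List α} (h : (a :: l).Pairwise (· ≥ ·))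
    {k : ℕ} (hk : k ≤ l.length) : (l.take k).sum ≤ ((a :: l).take k).sum := by
  induction l generalizing a k with
  | nil => simp [Nat.le_zero.1 hk]
  | cons b l ih =>
    cases k with
    | zero => simp
    | succ m =>
      have hba : b ≤ a := List.rel_of_pairwise_cons h List.mem_cons_self
      have hm : m ≤ l.length := by simpa using hk
      simpa only [List.take_succ_cons, List.sum_cons] using
        add_le_add hba (ih h.of_cons hm)

theorem List.sum_le_sum_take_card {l : List α} (hl : l.Pairwise (· ≥ ·)) {t : Multiset α}
    (ht : t ≤ l) : t.sum ≤ (l.take (Multiset.card t)).sum := by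
  induction l generalizing t with
  | nil => simp [Multiset.le_zero.1 (by simpa using ht)]
  | cons a l ih =>
    rw [← Multiset.cons_coe] at ht
    by_cases ha : a ∈ t
    · obtain ⟨t', rfl⟩ := Multiset.exists_cons_of_mem ha
      simpa only [Multiset.card_cons, List.take_succ_cons, List.sum_cons, Multiset.sum_cons] using
        add_le_add le_rfl (ih hl.of_cons ((Multiset.cons_le_cons_iff a).1 ht))
    · have ht' : t ≤ l := (Multiset.le_cons_of_notMem ha).1 ht
      have hcard : Multiset.card t ≤ l.length := by simpa using Multiset.card_le_card ht'
      exact (ih hl.of_cons ht').trans (List.sum_take_le_sum_take_cons hl hcard)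

end SortedSums

section TopP

theorem Multiset.coe_reverse_sort (s : Multiset ℝ) :
    (((s.sort (· ≤ ·)).reverse : List ℝ) : Multiset ℝ) = s := by
  rw [Multiset.coe_reverse, Multiset.sort_eq]

theorem Multiset.sum_le_topP {s t : Multiset ℝ} (h : t ≤ s) : t.sum ≤ topP (card t) s := by
  refine List.sum_le_sum_take_card ?_ (by rwa [Multiset.coe_reverse_sort])
  exact List.pairwise_reverse.2 (Multiset.pairwise_sort _ _)

theorem Multiset.exists_le_card_eq_sum_eq_topP {p : ℕ} {s : Multiset ℝ} (hp : p ≤ card s) :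
    ∃ t ≤ s, card t = p ∧ t.sum = topP p s := by
  refine ⟨((s.sort (· ≤ ·)).reverse.take p : List ℝ), ?_, ?_, rfl⟩
  · conv_rhs => rw [← Multiset.coe_reverse_sort s]
    exact Multiset.coe_le.2 (List.take_sublist _ _).subperm
  · simpa using hp

variable {ι : Type*} [Fintype ι]

theorem Finset.exists_card_eq_sum_eq_topP (x : ι → ℝ) {p : ℕ} (hp : p ≤ Fintype.card ι) :
    ∃ T : Finset ι, T.card = p ∧ ∑ i ∈ T, x i = topP p (univ.val.map x) := by
  obtain ⟨t, ht, hcard, hsum⟩ :=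
    Multiset.exists_le_card_eq_sum_eq_topP (s := univ.val.map x) (by simpa using hp)
  obtain ⟨u, hu, rfl⟩ := Multiset.exists_le_map_eq ht
  refine ⟨⟨u, Multiset.nodup_of_le hu univ.nodup⟩, by simpa using hcard, hsum⟩

theorem Finset.sum_le_topP_card (T : Finset ι) (y : ι → ℝ) :
    ∑ i ∈ T, y i ≤ topP T.card (univ.val.map y) := by
  simpa using Multiset.sum_le_topP
    (Multiset.map_le_map (f := y) (Finset.val_le_iff.2 (subset_univ T)))

theorem topP_sub_topP_le (x y : ι → ℝ) {p : ℕ} (hp : p ≤ Fintype.card ι) :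
    ∃ T : Finset ι, T.card = p ∧
      topP p (Finset.univ.val.map x) - topP p (Finset.univ.val.map y) ≤ ∑ i ∈ T, |x i - y i| := by
  obtain ⟨T, rfl, hx⟩ := Finset.exists_card_eq_sum_eq_topP x hp
  refine ⟨T, rfl, ?_⟩
  calc topP T.card (Finset.univ.val.map x) - topP T.card (Finset.univ.val.map y)
      ≤ ∑ i ∈ T, x i - ∑ i ∈ T, y i := by
        rw [hx]; exact sub_le_sub_left (T.sum_le_topP_card y) _
    _ = ∑ i ∈ T, (x i - y i) := Finset.sum_sub_distrib _ _ |>.symm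
    _ ≤ ∑ i ∈ T, |x i - y i| := Finset.sum_le_sum fun i _ => le_abs_self _

end TopP

theorem Finset.sum_le_card_mul_fold_max_add_sum_sdiff {ι : Type*} [Fintype ι] [DecidableEq ι]
    {f : ι → ℝ}
    (hf : ∀ i, 0 ≤ f i) (S T : Finset ι) :
    ∑ i ∈ T, f i ≤ T.card * S.fold max 0 f + ∑ i ∈ univ \ S, f i := by
  have hM : ∀ i ∈ S, f i ≤ S.fold max 0 f := fun i hi =>
    (Finset.le_fold_max _).2 (Or.inr ⟨i, hi, le_rfl⟩)
  have hM0 : 0 ≤ S.fold max 0 f := (Finset.le_fold_max _).2 (Or.inl le_rfl)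
  rw [← Finset.sum_inter_add_sum_sdiff T S]
  gcongr ?_ + ?_
  · calc ∑ i ∈ T ∩ S, f i ≤ (T ∩ S).card * S.fold max 0 f := by
          simpa using Finset.sum_le_card_nsmul _ _ _ fun i hi => hM i (Finset.mem_inter.1 hi).2
      _ ≤ T.card * S.fold max 0 f := by
          gcongr; exact Finset.inter_subset_left
  · exact Finset.sum_le_sum_of_subset_of_nonneg
      (Finset.sdiff_subset_sdiff (Finset.subset_univ T) le_rfl) fun i _ _ => hf i

theorem stmt_3_general (n : ℕ) (x y : Fin n → ℝ) (S : Finset (Fin n)) (p : ℕ)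
    (hpn : p ≤ n) :
    |topP p (Multiset.map x Finset.univ.val) - topP p (Multiset.map y Finset.univ.val)| ≤
      (p : ℝ) * (S.fold max 0 fun i => |x i - y i|) + ∑ i ∈ Finset.univ \ S, |x i - y i| := by
  have hp : p ≤ Fintype.card (Fin n) := by simpa using hpn
  have hbound (T : Finset (Fin n)) (hT : T.card = p) :=
    hT ▸ Finset.sum_le_card_mul_fold_max_add_sum_sdiff (fun i => abs_nonneg (x i - y i)) S T
  obtain ⟨T, hT, hxy⟩ := topP_sub_topP_le x y hp
  obtain ⟨T', hT', hyx⟩ := topP_sub_topP_le y x hp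
  simp only [abs_sub_comm (y _)] at hyx
  exact abs_sub_le_iff.2 ⟨hxy.trans (hbound T hT), hyx.trans (hbound T' hT')⟩

theorem stmt_3 (n : ℕ) (x y : Fin n → ℝ) (S : Finset (Fin n)) (p : ℕ)
    (hp : 1 ≤ p) (hpn : p ≤ n) :
    |topP p (Multiset.map x Finset.univ.val) - topP p (Multiset.map y Finset.univ.val)| ≤
      (p : ℝ) * (S.fold max 0 fun i => |x i - y i|) + ∑ i ∈ Finset.univ \ S, |x i - y i| :=
  stmt_3_general n x y S p hpn
end

section
/- Let X ⊂ ℝ^d be a finite set of n points, let ε ∈ (0,1), and let D be a finite multiset of points in ℝ^d (a finite set with positive integer multiplicities) such that for every p ∈ {1,…,n} and every finite set C ⊂ ℝ^d of k centers, cost_p(D,C) ∈ [(1−ε)·cost_p(X,C), (1+ε)·cost_p(X,C)]. Then for every nonincreasing weight vector v ∈ ℝ₊^n and every finite set C ⊂ ℝ^d of k centers, cost_v(D,C) ∈ [(1−ε)·cost_v(X,C), (1+ε)·cost_v(X,C)]. -/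
/-- The p-Centrum objective: the sum of the `p` largest distances from the points
of the multiset `s` (with multiplicity) to the nearest center in `C`. -/
noncomputable def costP (d : ℕ) (p : ℕ) (s : Multiset (EuclideanSpace ℝ (Fin d)))
    (C : Finset (EuclideanSpace ℝ (Fin d))) : ℝ :=
  topP p (s.map fun x => Metric.infDist x (C : Set (EuclideanSpace ℝ (Fin d))))

/-- The list of distances from the points of the multiset `s` (with multiplicity) to the
nearest center of `C`, sorted in nonincreasing order. -/
noncomputable def sortedDistsDesc (d : ℕ) (s : Multiset (EuclideanSpace ℝ (Fin d)))
    (C : Finset (EuclideanSpace ℝ (Fin d))) : List ℝ :=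
  ((s.map fun x => Metric.infDist x (C : Set (EuclideanSpace ℝ (Fin d)))).sort (· ≤ ·)).reverse

/-- The ordered weighted objective for a weight vector `v ∈ ℝ^n` applied to a multiset of
total multiplicity `n`: the `i`-th weight multiplies the `i`-th largest distance. -/
noncomputable def costV (d n : ℕ) (v : Fin n → ℝ) (s : Multiset (EuclideanSpace ℝ (Fin d)))
    (C : Finset (EuclideanSpace ℝ (Fin d))) : ℝ :=
  ∑ i : Fin n, v i * (sortedDistsDesc d s C).getD i 0

lemma take_sum_eq (L : List ℝ) : ∀ p : ℕ,
    (L.take p).sum = ∑ i ∈ Finset.range p, L.getD i 0 := by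
  induction L with
  | nil => intro p; simp
  | cons a L ih =>
    intro p
    cases p with
    | zero => simp
    | succ p =>
      rw [Finset.sum_range_succ']
      simp [ih p, add_comm]

lemma costP_eq (d p : ℕ) (s : Multiset (EuclideanSpace ℝ (Fin d)))
    (C : Finset (EuclideanSpace ℝ (Fin d))) :
    costP d p s C = ∑ i ∈ Finset.range p, (sortedDistsDesc d s C).getD i 0 := by
  rw [costP, topP, ← take_sum_eq]
  rfl

lemma abel_aux (V A : ℕ → ℝ) (m : ℕ) :
    ∑ i ∈ Finset.range m, V i * A i
      = V m * (∑ i ∈ Finset.range m, A i)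
        + ∑ p ∈ Finset.range m,
            (V p - V (p + 1)) * (∑ i ∈ Finset.range (p + 1), A i) := by
  induction m with
  | zero => simp
  | succ m ih =>
    rw [Finset.sum_range_succ, ih, Finset.sum_range_succ
      (fun p => (V p - V (p + 1)) * (∑ i ∈ Finset.range (p + 1), A i)),
      Finset.sum_range_succ A]
    ring

theorem stmt_6 {d k n : ℕ} (hk : 1 ≤ k) (X : Finset (EuclideanSpace ℝ (Fin d)))
    (hX : X.card = n) (ε : ℝ) (hε : ε ∈ Set.Ioo (0 : ℝ) 1)
    (D : Multiset (EuclideanSpace ℝ (Fin d))) (hD : Multiset.card D = n)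
    (hcoreset : ∀ p : ℕ, 1 ≤ p → p ≤ n →
      ∀ C : Finset (EuclideanSpace ℝ (Fin d)), C.card = k → C.Nonempty →
        costP d p D C ∈ Set.Icc ((1 - ε) * costP d p X.val C) ((1 + ε) * costP d p X.val C)) :
    ∀ v : Fin n → ℝ, (∀ i, 0 ≤ v i) → Antitone v →
      ∀ C : Finset (EuclideanSpace ℝ (Fin d)), C.card = k → C.Nonempty →
        costV d n v D C ∈ Set.Icc ((1 - ε) * costV d n v X.val C)
          ((1 + ε) * costV d n v X.val C) := by
  intro v hv hanti C hC hCne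
  -- extend v by zero
  set V : ℕ → ℝ := fun i => if h : i < n then v ⟨i, h⟩ else 0 with hV
  have hVn : V n = 0 := by simp [hV]
  have hw : ∀ p, p < n → 0 ≤ V p - V (p + 1) := by
    intro p hp
    by_cases h1 : p + 1 < n
    · have := hanti (show (⟨p, hp⟩ : Fin n) ≤ ⟨p + 1, h1⟩ by
        simp [Fin.le_def])
      simp only [hV, dif_pos hp, dif_pos h1]
      linarith
    · simp only [hV, dif_pos hp, dif_neg h1]
      simpa using hv ⟨p, hp⟩
  -- rewrite costV as Abel sum
  have key : ∀ s : Multiset (EuclideanSpace ℝ (Fin d)),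
      costV d n v s C
        = ∑ p ∈ Finset.range n, (V p - V (p + 1)) * costP d (p + 1) s C := by
    intro s
    have h1 : costV d n v s C
        = ∑ i ∈ Finset.range n, V i * (sortedDistsDesc d s C).getD i 0 := by
      rw [costV, Finset.sum_range fun i => V i * (sortedDistsDesc d s C).getD i 0]
      apply Finset.sum_congr rfl
      intro i _
      simp [hV, i.isLt]
    rw [h1, abel_aux V (fun i => (sortedDistsDesc d s C).getD i 0) n, hVn]
    simp only [zero_mul, zero_add]
    exact Finset.sum_congr rfl fun p _ => by rw [costP_eq]
  rw [key D, key X.val]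
  constructor
  · rw [Finset.mul_sum]
    apply Finset.sum_le_sum
    intro p hp
    have hcp := (hcoreset (p + 1) (by omega) (by
      exact Nat.succ_le_of_lt (Finset.mem_range.mp hp)) C hC hCne).1
    have hwp := hw p (Finset.mem_range.mp hp)
    have h := mul_le_mul_of_nonneg_left hcp hwp
    nlinarith [h]
  · rw [Finset.mul_sum]
    apply Finset.sum_le_sum
    intro p hp
    have hcp := (hcoreset (p + 1) (by omega) (by
      exact Nat.succ_le_of_lt (Finset.mem_range.mp hp)) C hC hCne).2
    have hwp := hw p (Finset.mem_range.mp hp)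
    have h := mul_le_mul_of_nonneg_left hcp hwp
    nlinarith [h]
end

section
/- There exist a constant c > 0 and N₀ ∈ ℕ such that for every integer n ≥ N₀ and every ε with n^{−1/3} < ε < 1/2, there exists an n-point set X ⊂ ℝ with the following property: every finite multiset D of points in ℝ (points with positive integer multiplicities) that satisfies cost_p(D,{y}) ∈ [(1−ε)·cost_p(X,{y}), (1+ε)·cost_p(X,{y})] for every p ∈ {1,…,n} and every center y ∈ ℝ must have at least c·ε^{−1/2}·log n distinct points. -/
/-- The p-Centrum objective with one facility `y ∈ ℝ`: the sum of the `p` largest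
distances `|x - y|` over the points of the multiset `s`, counted with multiplicity. -/
noncomputable def cost1 (p : ℕ) (s : Multiset ℝ) (y : ℝ) : ℝ :=
  topP p (s.map fun x => |x - y|)

/-!
At the center `0` every cost of `D` is a sum of the `p` largest values `|d|`, i.e. a prefix sum
of the decreasing rearrangement of `|D|`; every strict drop of that rearrangement is a new
distinct value of `|D|`, so it suffices to force many drops.

The hard instance has `m ≈ log₁₀₂₄ n` blocks: block `i` consists of `1024 ^ i` equally spaced
points in `(B_i, 2 B_i]` with `B_i = 256 ^ (m - i)`, followed by small filler points. Inside a
block the prefix sums of `X` are strictly concave, and over a window of length `2h` with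
`h ≈ 4 √ε 1024 ^ i` their second difference is too large for a `(1 ± ε)`-approximation that is
linear on the window, i.e. one whose rearrangement does not drop there. This yields
`≈ ε^(-1/2)` drops in every block with `ε 1024 ^ i ≥ 1`, and since `ε > n^(-1/3)` these are
about `2m/3` of the blocks. When `ε` is bounded below, the rearrangement instead loses a factor
`≥ 256` between every other block boundary, which gives `≈ m / 2` drops.
-/

open Finset

lemma exists_drop_of_lt {f : ℕ → ℝ} {a b : ℕ} (hab : a ≤ b) (h : f b < f a) :
    ∃ q ∈ Ico a b, f (q + 1) < f q := by
  induction b, hab using Nat.le_induction with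
  | base => exact absurd h (lt_irrefl _)
  | succ b hab ih =>
    by_cases hb : f b < f a
    · obtain ⟨q, hq, hlt⟩ := ih hb
      exact ⟨q, Ico_subset_Ico_right b.le_succ hq, hlt⟩
    · exact ⟨b, by simp [hab], by linarith⟩

section Sorted

noncomputable def descList (s : Multiset ℝ) : List ℝ := (s.sort (· ≤ ·)).reverse

lemma pairwise_descList (s : Multiset ℝ) : (descList s).Pairwise (· ≥ ·) := by
  simp [descList, List.pairwise_reverse]

@[simp] lemma coe_descList (s : Multiset ℝ) : (descList s : Multiset ℝ) = s := by
  simp [descList]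

/-- The `q`-th largest entry of `s` (from `q = 0`), and `0` past the end. -/
noncomputable def nthLargest (s : Multiset ℝ) (q : ℕ) : ℝ := (descList s).getD q 0

lemma topP_succ (s : Multiset ℝ) (p : ℕ) : topP (p + 1) s = topP p s + nthLargest s p := by
  change ((descList s).take (p + 1)).sum = ((descList s).take p).sum + (descList s).getD p 0
  rcases lt_or_ge p (descList s).length with h | h
  · rw [List.sum_take_succ _ p h, List.getD_eq_getElem _ _ h]
  · rw [List.take_of_length_le h, List.take_of_length_le (by omega),
      List.getD_eq_default _ _ h, add_zero]

lemma topP_eq_sum_nthLargest (s : Multiset ℝ) (p : ℕ) :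
    topP p s = ∑ q ∈ range p, nthLargest s q := by
  induction p with
  | zero => simp [topP]
  | succ p ih => rw [topP_succ, ih, sum_range_succ]

lemma topP_add (s : Multiset ℝ) (a k : ℕ) :
    topP (a + k) s = topP a s + ∑ q ∈ range k, nthLargest s (a + q) := by
  rw [topP_eq_sum_nthLargest, topP_eq_sum_nthLargest, sum_range_add]

lemma topP_coe_of_pairwise {L : List ℝ} (hL : L.Pairwise (· ≥ ·)) (p : ℕ) :
    topP p (L : Multiset ℝ) = (L.take p).sum := by
  have hperm : (descList (L : Multiset ℝ)).Perm L :=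
    Multiset.coe_eq_coe.mp (coe_descList (L : Multiset ℝ))
  change ((descList (L : Multiset ℝ)).take p).sum = _
  rw [hperm.eq_of_pairwise' (pairwise_descList _) hL]

variable {s : Multiset ℝ}

lemma exists_drop_of_topP_lt {a h : ℕ}
    (hlt : topP a s + topP (a + 2 * h) s < 2 * topP (a + h) s) :
    ∃ q ∈ Ico a (a + 2 * h), nthLargest s (q + 1) < nthLargest s q := by
  rw [two_mul, ← add_assoc, topP_add s (a + h), topP_add s a] at hlt
  obtain ⟨q, hq, hq'⟩ := exists_lt_of_sum_lt (s := range h)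
    (f := fun q => nthLargest s (a + h + q)) (g := fun q => nthLargest s (a + q)) (by linarith)
  obtain ⟨q', hq', hlt'⟩ := exists_drop_of_lt (by omega) hq'
  have := mem_range.mp hq
  exact ⟨q', by simp only [mem_Ico] at hq' ⊢; omega, hlt'⟩

lemma nthLargest_mem {q : ℕ} (h : nthLargest s q ≠ 0) : nthLargest s q ∈ s := by
  rcases lt_or_ge q (descList s).length with hq | hq
  · rw [nthLargest, List.getD_eq_getElem _ _ hq]
    simpa using Multiset.mem_coe.mpr (List.getElem_mem hq)
  · exact absurd (List.getD_eq_default _ _ hq) h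

lemma nthLargest_nonneg (hs : ∀ x ∈ s, 0 ≤ x) (q : ℕ) : 0 ≤ nthLargest s q := by
  by_cases h : nthLargest s q = 0
  · exact h.ge
  · exact hs _ (nthLargest_mem h)

lemma antitone_nthLargest (hs : ∀ x ∈ s, 0 ≤ x) : Antitone (nthLargest s) := by
  intro q q' hqq'
  rcases lt_or_ge q' (descList s).length with h' | h'
  · have hq := hqq'.trans_lt h'
    rw [nthLargest, nthLargest, List.getD_eq_getElem _ _ h', List.getD_eq_getElem _ _ hq]
    rcases hqq'.eq_or_lt with rfl | hlt
    · rfl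
    · exact List.pairwise_iff_getElem.mp (pairwise_descList s) q q' hq h' hlt
  · rw [nthLargest, List.getD_eq_default _ _ h']
    exact nthLargest_nonneg hs q

lemma topP_add_le (hs : ∀ x ∈ s, 0 ≤ x) (a k : ℕ) :
    topP (a + k) s ≤ topP a s + k * nthLargest s a := by
  rw [topP_add]
  have := sum_le_card_nsmul (range k) (fun q => nthLargest s (a + q)) (nthLargest s a)
    fun q _ => antitone_nthLargest hs (Nat.le_add_right a q)
  simpa using this

lemma mul_nthLargest_le_topP (hs : ∀ x ∈ s, 0 ≤ x) (p : ℕ) : p * nthLargest s p ≤ topP p s := by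
  rw [topP_eq_sum_nthLargest]
  have := card_nsmul_le_sum (range p) (nthLargest s) (nthLargest s p)
    fun q hq => antitone_nthLargest hs (mem_range.mp hq).le
  simpa using this

lemma card_le_card_toFinset_of_drops (hs : ∀ x ∈ s, 0 ≤ x) {A : Finset ℕ}
    (hA : ∀ q ∈ A, nthLargest s (q + 1) < nthLargest s q) : #A ≤ #s.toFinset := by
  have hanti : StrictAntiOn (nthLargest s) A := by
    intro q hq q' hq' hlt
    exact (antitone_nthLargest hs hlt).trans_lt (hA q hq)
  refine card_le_card_of_injOn _ (fun q hq => ?_) hanti.injOn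
  have hne : nthLargest s q ≠ 0 :=
    ((nthLargest_nonneg hs (q + 1)).trans_lt (hA q hq)).ne'
  exact Multiset.mem_toFinset.mpr (nthLargest_mem hne)

lemma card_le_card_toFinset_of_windows (hs : ∀ x ∈ s, 0 ≤ x) {ι : Type*} {I : Finset ι}
    {W : ι → Finset ℕ} (hW : (I : Set ι).PairwiseDisjoint W)
    (hdrop : ∀ i ∈ I, ∃ q ∈ W i, nthLargest s (q + 1) < nthLargest s q) :
    #I ≤ #s.toFinset := by
  classical
  let drops (i : ι) := (W i).filter fun q => nthLargest s (q + 1) < nthLargest s q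
  calc #I ≤ #(I.biUnion drops) :=
        card_le_card_biUnion (hW.mono fun i => filter_subset _ _) fun i hi => by
          obtain ⟨q, hq, hlt⟩ := hdrop i hi
          exact ⟨q, mem_filter.mpr ⟨hq, hlt⟩⟩
    _ ≤ #s.toFinset := card_le_card_toFinset_of_drops hs fun q hq => by
          obtain ⟨i, -, hq⟩ := mem_biUnion.mp hq
          exact (mem_filter.mp hq).2

end Sorted

def blocksLen (i : ℕ) : ℕ := ∑ j ∈ range i, 1024 ^ (j + 1)

noncomputable def blockScale (m i : ℕ) : ℝ := 256 ^ m / 256 ^ i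

noncomputable def block (m i : ℕ) : List ℝ :=
  (List.range (1024 ^ i)).map fun j : ℕ => blockScale m i * (2 - j / 1024 ^ i)

noncomputable def blocks (m i : ℕ) : List ℝ :=
  (List.range i).flatMap fun j => block m (j + 1)

noncomputable def filler (k : ℕ) : List ℝ :=
  (List.range k).map fun j : ℕ => 1 / ((j : ℝ) + 2)

noncomputable def hardList (m k : ℕ) : List ℝ := blocks m m ++ filler k

noncomputable def hardSet (m k : ℕ) : Finset ℝ := (hardList m k).toFinset

noncomputable def blockMass (m i : ℕ) : ℝ := 256 ^ m * 4 ^ i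

lemma blocksLen_succ (i : ℕ) : blocksLen (i + 1) = blocksLen i + 1024 ^ (i + 1) :=
  sum_range_succ _ _

lemma blocksLen_mono : Monotone blocksLen := fun _ _ h =>
  sum_le_sum_of_subset (range_subset_range.mpr h)

lemma pow_le_blocksLen (i : ℕ) : 1024 ^ (i + 1) ≤ blocksLen (i + 1) := by
  rw [blocksLen_succ]; omega

lemma mul_blocksLen_add_le_pow (i : ℕ) : 1023 * blocksLen i + 1024 ≤ 1024 ^ (i + 1) := by
  induction i with
  | zero => simp [blocksLen]
  | succ i ih => rw [blocksLen_succ, pow_succ]; omega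

lemma blockScale_pos (m i : ℕ) : 0 < blockScale m i := by
  unfold blockScale; positivity

lemma blockScale_succ (m i : ℕ) : blockScale m (i + 1) = blockScale m i / 256 := by
  unfold blockScale; rw [pow_succ]; ring

lemma blockScale_antitone (m : ℕ) : Antitone (blockScale m) := fun i j h =>
  div_le_div_of_nonneg_left (by positivity) (by positivity)
    (pow_le_pow_right₀ (by norm_num) h)

lemma one_le_blockScale {m i : ℕ} (h : i ≤ m) : 1 ≤ blockScale m i := by
  rw [blockScale, le_div_iff₀ (by positivity), one_mul]
  exact pow_le_pow_right₀ (by norm_num) h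

lemma pow_mul_blockScale (m i : ℕ) : (1024 : ℝ) ^ i * blockScale m i = blockMass m i := by
  rw [blockScale, blockMass, show (1024 : ℝ) = 256 * 4 by norm_num, mul_pow]
  field_simp

lemma blockMass_pos (m i : ℕ) : 0 < blockMass m i := by
  unfold blockMass; positivity

lemma mem_block {m i : ℕ} {x : ℝ} (hx : x ∈ block m i) :
    blockScale m i < x ∧ x ≤ 2 * blockScale m i := by
  obtain ⟨j, hj, rfl⟩ := List.mem_map.mp hx
  have hj : (j : ℝ) / 1024 ^ i < 1 := by
    rw [div_lt_one (by positivity)]; exact_mod_cast List.mem_range.mp hj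
  have := blockScale_pos m i
  constructor <;> nlinarith [show 0 ≤ (j : ℝ) / 1024 ^ i by positivity]

lemma pairwise_block (m i : ℕ) : (block m i).Pairwise (· > ·) := by
  refine List.Pairwise.map _ (fun a b hab => ?_) List.pairwise_lt_range
  have : (a : ℝ) / 1024 ^ i < b / 1024 ^ i :=
    div_lt_div_of_pos_right (by exact_mod_cast hab) (by positivity)
  nlinarith [blockScale_pos m i]

lemma blocks_succ (m i : ℕ) : blocks m (i + 1) = blocks m i ++ block m (i + 1) := by
  simp [blocks, List.range_succ, List.flatMap_append]

lemma length_blocks (m i : ℕ) : (blocks m i).length = blocksLen i := by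
  induction i with
  | zero => simp [blocks, blocksLen]
  | succ i ih => simp [blocks_succ, ih, blocksLen_succ, block]

lemma mem_blocks {m i : ℕ} {x : ℝ} (hx : x ∈ blocks m i) :
    ∃ j, 1 ≤ j ∧ j ≤ i ∧ x ∈ block m j := by
  obtain ⟨j, hj, hx⟩ := List.mem_flatMap.mp hx
  exact ⟨j + 1, by omega, List.mem_range.mp hj, hx⟩

lemma blocks_prefix (m : ℕ) {i j : ℕ} (hij : i ≤ j) : blocks m i <+: blocks m j := by
  induction j, hij using Nat.le_induction with
  | base => exact List.prefix_refl _
  | succ j _ ih => exact ih.trans (blocks_succ m j ▸ List.prefix_append _ _)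

lemma pairwise_blocks {m i : ℕ} (him : i ≤ m) : (blocks m i).Pairwise (· > ·) := by
  induction i with
  | zero => simp [blocks]
  | succ i ih =>
    rw [blocks_succ, List.pairwise_append]
    refine ⟨ih (by omega), pairwise_block m (i + 1), fun x hx y hy => ?_⟩
    obtain ⟨l, -, hl, hxl⟩ := mem_blocks hx
    have := blockScale_antitone m (show l + 1 ≤ i + 1 by omega)
    linarith [(mem_block hxl).1, (mem_block hy).2, blockScale_succ m l, blockScale_pos m l]

lemma mem_filler {k : ℕ} {x : ℝ} (hx : x ∈ filler k) : 0 < x ∧ x ≤ 1 / 2 := by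
  obtain ⟨j, -, rfl⟩ := List.mem_map.mp hx
  refine ⟨by positivity, ?_⟩
  rw [div_le_div_iff₀ (by positivity) (by norm_num)]
  linarith [j.cast_nonneg (α := ℝ)]

lemma pairwise_filler (k : ℕ) : (filler k).Pairwise (· > ·) := by
  refine List.Pairwise.map _ (fun a b hab => ?_) List.pairwise_lt_range
  exact one_div_lt_one_div_of_lt (by positivity) (by simpa using hab)

lemma pairwise_hardList (m k : ℕ) : (hardList m k).Pairwise (· > ·) := by
  refine List.pairwise_append.mpr ⟨pairwise_blocks le_rfl, pairwise_filler k, fun x hx y hy => ?_⟩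
  obtain ⟨l, -, hl, hxl⟩ := mem_blocks hx
  linarith [(mem_block hxl).1, (mem_filler hy).2, one_le_blockScale hl]

lemma pos_of_mem_hardList {m k : ℕ} {x : ℝ} (hx : x ∈ hardList m k) : 0 < x := by
  rcases List.mem_append.mp hx with hx | hx
  · obtain ⟨l, -, -, hxl⟩ := mem_blocks hx
    linarith [(mem_block hxl).1, blockScale_pos m l]
  · exact (mem_filler hx).1

lemma length_hardList (m k : ℕ) : (hardList m k).length = blocksLen m + k := by
  simp [hardList, length_blocks, filler]

lemma nodup_hardList (m k : ℕ) : (hardList m k).Nodup :=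
  (pairwise_hardList m k).imp ne_of_gt

lemma card_hardSet (m k : ℕ) : #(hardSet m k) = blocksLen m + k := by
  rw [hardSet, List.toFinset_card_of_nodup (nodup_hardList m k), length_hardList]

noncomputable def hardPrefix (m k p : ℕ) : ℝ := ((hardList m k).take p).sum

lemma sum_take_block (m i q : ℕ) (hq : q ≤ 1024 ^ i) :
    ((block m i).take q).sum = blockScale m i * (2 * q - q * (q - 1) / (2 * 1024 ^ i)) := by
  rw [block, ← List.map_take, List.take_range, min_eq_left hq]
  clear hq
  induction q with
  | zero => simp
  | succ q ih =>
    rw [List.range_succ, List.map_append, List.sum_append, ih, List.map_singleton,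
      List.sum_singleton]
    push_cast
    field_simp
    ring

lemma sum_block (m i : ℕ) :
    (block m i).sum = blockScale m i * (2 * 1024 ^ i - ((1024 : ℝ) ^ i - 1) / 2) := by
  have h := sum_take_block m i (1024 ^ i) le_rfl
  rw [List.take_of_length_le (by simp [block])] at h
  rw [h]; push_cast; field_simp

lemma sum_block_le (m i : ℕ) : (block m i).sum ≤ 2 * blockMass m i := by
  rw [sum_block, ← pow_mul_blockScale]
  nlinarith [blockScale_pos m i, one_le_pow₀ (show (1 : ℝ) ≤ 1024 by norm_num) (n := i)]

lemma three_halves_blockMass_le_sum_block (m i : ℕ) : 3 / 2 * blockMass m i ≤ (block m i).sum := by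
  rw [sum_block, ← pow_mul_blockScale]
  nlinarith [blockScale_pos m i, one_le_pow₀ (show (1 : ℝ) ≤ 1024 by norm_num) (n := i)]

lemma sum_blocks_nonneg (m i : ℕ) : 0 ≤ (blocks m i).sum :=
  List.sum_nonneg fun x hx => by
    obtain ⟨l, -, -, hxl⟩ := mem_blocks hx
    linarith [(mem_block hxl).1, blockScale_pos m l]

lemma sum_blocks_le (m i : ℕ) : (blocks m i).sum ≤ 2 / 3 * blockMass m (i + 1) := by
  induction i with
  | zero => simpa [blocks] using (blockMass_pos m 1).le
  | succ i ih =>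
    rw [blocks_succ, List.sum_append]
    have : blockMass m (i + 2) = 4 * blockMass m (i + 1) := by unfold blockMass; ring
    linarith [sum_block_le m (i + 1)]

lemma monotone_hardPrefix (m k : ℕ) : Monotone (hardPrefix m k) := by
  intro p p' h
  obtain ⟨d, rfl⟩ := Nat.exists_eq_add_of_le h
  rw [hardPrefix, hardPrefix, List.take_add, List.sum_append, le_add_iff_nonneg_right]
  exact List.sum_nonneg fun x hx =>
    (pos_of_mem_hardList (List.mem_of_mem_drop (List.mem_of_mem_take hx))).le

lemma hardPrefix_blocksLen {m i : ℕ} (k : ℕ) (him : i ≤ m) :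
    hardPrefix m k (blocksLen i) = (blocks m i).sum := by
  obtain ⟨l, hl⟩ := blocks_prefix m him
  rw [hardPrefix, hardList, ← hl, List.append_assoc, ← length_blocks m i, List.take_left]

lemma hardPrefix_blocksLen_add {m i : ℕ} (k : ℕ) (him : i < m) {q : ℕ} (hq : q ≤ 1024 ^ (i + 1)) :
    hardPrefix m k (blocksLen i + q) = (blocks m i).sum
      + blockScale m (i + 1) * (2 * q - q * (q - 1) / (2 * 1024 ^ (i + 1))) := by
  obtain ⟨l, hl⟩ := blocks_prefix m him
  rw [blocks_succ] at hl
  rw [hardPrefix, hardList, ← hl, ← length_blocks m i, List.append_assoc, List.append_assoc,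
    List.take_length_add_append, List.sum_append,
    List.take_append_of_le_length (by simpa [block] using hq), sum_take_block _ _ _ hq]

lemma hardPrefix_add_hardPrefix {m j : ℕ} (k : ℕ) (hjm : j < m) {Q h : ℕ}
    (hQh : Q + 2 * h ≤ 1024 ^ (j + 1)) :
    hardPrefix m k (blocksLen j + Q) + hardPrefix m k (blocksLen j + Q + 2 * h) =
      2 * hardPrefix m k (blocksLen j + Q + h) - blockScale m (j + 1) * h ^ 2 / 1024 ^ (j + 1) := by
  rw [add_assoc, add_assoc, hardPrefix_blocksLen_add k hjm (q := Q) (by omega),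
    hardPrefix_blocksLen_add k hjm (q := Q + h) (by omega), hardPrefix_blocksLen_add k hjm hQh]
  push_cast
  field_simp
  ring

lemma cost1_hardSet_zero (m k p : ℕ) : cost1 p (hardSet m k).val 0 = hardPrefix m k p := by
  have hmap : (hardList m k).map (fun x => |x - 0|) = hardList m k :=
    (List.map_congr_left fun x hx => by
      rw [sub_zero, abs_of_pos (pos_of_mem_hardList hx), id]).trans (List.map_id _)
  rw [cost1, hardSet, List.toFinset_val, (nodup_hardList m k).dedup, Multiset.map_coe, hmap,
    topP_coe_of_pairwise ((pairwise_hardList m k).imp le_of_lt)]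
  rfl

lemma cost1_zero (p : ℕ) (D : Multiset ℝ) : cost1 p D 0 = topP p (D.map abs) := by
  simp only [cost1, sub_zero]

lemma two_mul_floor_mul_ceil_le {δ : ℝ} (hδ : 0 < δ) {t : ℕ} (ht : 1 ≤ δ * t) :
    2 * ⌊δ⁻¹ / 10⌋₊ * ⌈4 * δ * t⌉₊ ≤ t := by
  have hK : (⌊δ⁻¹ / 10⌋₊ : ℝ) ≤ δ⁻¹ / 10 := Nat.floor_le (by positivity)
  have hH : (⌈4 * δ * t⌉₊ : ℝ) ≤ 5 * δ * t := by
    linarith [Nat.ceil_lt_add_one (show 0 ≤ 4 * δ * t by positivity)]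
  have : (2 * ⌊δ⁻¹ / 10⌋₊ * ⌈4 * δ * t⌉₊ : ℝ) ≤ 2 * (δ⁻¹ / 10) * (5 * δ * t) := by
    gcongr
  rw [show 2 * (δ⁻¹ / 10) * (5 * δ * t) = (t : ℝ) by field_simp; ring] at this
  exact_mod_cast this

def blockWindow (H : ℕ → ℕ) (e : ℕ × ℕ) : Finset ℕ :=
  Ico (blocksLen e.1 + 2 * H e.1 * e.2) (blocksLen e.1 + 2 * H e.1 * e.2 + 2 * H e.1)

lemma lt_of_mem_blockWindow {H : ℕ → ℕ} {K j j' r r' q q' : ℕ}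
    (hfit : 2 * H j * K ≤ 1024 ^ (j + 1)) (hr : r < K) (hjj' : j < j')
    (hq : q ∈ blockWindow H (j, r)) (hq' : q' ∈ blockWindow H (j', r')) :
    q < q' := by
  simp only [blockWindow, mem_Ico] at hq hq'
  have := Nat.mul_le_mul_left (2 * H j) (show r + 1 ≤ K from hr)
  have := blocksLen_succ j
  have := blocksLen_mono (show j + 1 ≤ j' from hjj')
  rw [mul_add_one] at *
  omega

lemma pairwiseDisjoint_blockWindow {H : ℕ → ℕ} {S : Finset ℕ} {K : ℕ}
    (hfit : ∀ j ∈ S, 2 * H j * K ≤ 1024 ^ (j + 1)) :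
    ((S ×ˢ range K : Finset (ℕ × ℕ)) : Set (ℕ × ℕ)).PairwiseDisjoint (blockWindow H) := by
  rintro ⟨j, r⟩ he ⟨j', r'⟩ he' hne
  simp only [coe_product, Set.mem_prod, mem_coe, mem_range] at he he'
  refine disjoint_left.mpr fun q hq hq' => ?_
  rcases lt_trichotomy j j' with hlt | rfl | hlt
  · exact (lt_of_mem_blockWindow (hfit j he.1) he.2 hlt hq hq').false
  · have key : ∀ r, q ∈ blockWindow H (j, r) → (q - blocksLen j) / (2 * H j) = r := by
      intro r hr
      simp only [blockWindow, mem_Ico] at hr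
      have h1 : r * (2 * H j) = 2 * H j * r := mul_comm _ _
      have h2 : (r + 1) * (2 * H j) = 2 * H j * r + 2 * H j := by ring
      exact Nat.div_eq_of_lt_le (by omega) (by omega)
    exact hne (by rw [← key r hq, ← key r' hq'])
  · exact (lt_of_mem_blockWindow (hfit j' he'.1) he'.2 hlt hq' hq).false

def PrefixApprox (ε : ℝ) (s : Multiset ℝ) (m k : ℕ) : Prop :=
  ∀ p ≤ blocksLen m, (1 - ε) * hardPrefix m k p ≤ topP p s ∧ topP p s ≤ (1 + ε) * hardPrefix m k p

lemma prefixApprox_of_cost1 {ε : ℝ} {D : Multiset ℝ} {m k : ℕ}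
    (hD : ∀ p, 1 ≤ p → p ≤ blocksLen m → cost1 p D 0 ∈
      Set.Icc ((1 - ε) * cost1 p (hardSet m k).val 0) ((1 + ε) * cost1 p (hardSet m k).val 0)) :
    PrefixApprox ε (D.map abs) m k := by
  intro p hp
  rcases Nat.eq_zero_or_pos p with rfl | hp0
  · simp [topP, hardPrefix]
  · have := hD p hp0 hp
    rwa [cost1_hardSet_zero, cost1_zero, Set.mem_Icc] at this

section Coreset

variable {ε : ℝ} {s : Multiset ℝ} {m k : ℕ}

lemma blockScale_div_le_nthLargest (hs : ∀ x ∈ s, 0 ≤ x) (hF : PrefixApprox ε s m k)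
    (hε : ε < 1 / 2) {i : ℕ} (him : i + 2 ≤ m) :
    blockScale m (i + 2) / 12 ≤ nthLargest s (blocksLen (i + 1)) := by
  have hadd := topP_add_le hs (blocksLen (i + 1)) (1024 ^ (i + 2))
  rw [← blocksLen_succ] at hadd
  have hlo := (hF _ (blocksLen_mono him)).1
  have hhi := (hF _ (blocksLen_mono (show i + 1 ≤ m by omega))).2
  rw [hardPrefix_blocksLen k him, blocks_succ, List.sum_append] at hlo
  rw [hardPrefix_blocksLen k (by omega)] at hhi
  push_cast at hadd
  have hmass : blockMass m (i + 2) / 12 ≤ 1024 ^ (i + 2) * nthLargest s (blocksLen (i + 1)) := by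
    nlinarith [three_halves_blockMass_le_sum_block m (i + 2), sum_blocks_le m (i + 1),
      sum_blocks_nonneg m (i + 1), blockMass_pos m (i + 2)]
  rw [← pow_mul_blockScale, mul_div_assoc] at hmass
  exact le_of_mul_le_mul_left hmass (by positivity)

lemma nthLargest_le_blockScale (hs : ∀ x ∈ s, 0 ≤ x) (hF : PrefixApprox ε s m k)
    (hε : ε < 1 / 2) {i : ℕ} (him : i + 2 ≤ m) :
    nthLargest s (blocksLen (i + 1)) ≤ 1024 * blockScale m (i + 2) := by
  have hhi := (hF _ (blocksLen_mono (show i + 1 ≤ m by omega))).2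
  rw [hardPrefix_blocksLen k (by omega)] at hhi
  have hlen : (1024 : ℝ) ^ (i + 1) ≤ blocksLen (i + 1) := by exact_mod_cast pow_le_blocksLen i
  have hmass : blockMass m (i + 2) = 1024 ^ (i + 1) * (1024 * blockScale m (i + 2)) := by
    rw [← pow_mul_blockScale, pow_succ]; ring
  refine le_of_mul_le_mul_left ?_ (lt_of_lt_of_le (by positivity) hlen)
  calc (blocksLen (i + 1) : ℝ) * nthLargest s (blocksLen (i + 1))
      ≤ (1 + ε) * (blocks m (i + 1)).sum := (mul_nthLargest_le_topP hs _).trans hhi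
    _ ≤ 3 / 2 * (2 / 3 * blockMass m (i + 2)) := by
        nlinarith [sum_blocks_le m (i + 1), sum_blocks_nonneg m (i + 1)]
    _ ≤ blocksLen (i + 1) * (1024 * blockScale m (i + 2)) := by
        rw [hmass]; nlinarith [blockScale_pos m (i + 2)]

lemma exists_drop_between_blocks (hs : ∀ x ∈ s, 0 ≤ x) (hF : PrefixApprox ε s m k)
    (hε : ε < 1 / 2) {i : ℕ} (him : i + 4 ≤ m) :
    ∃ q ∈ Ico (blocksLen (i + 1)) (blocksLen (i + 3)),
      nthLargest s (q + 1) < nthLargest s q := by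
  refine exists_drop_of_lt (blocksLen_mono (by omega)) ?_
  have hhi := nthLargest_le_blockScale hs hF hε (i := i + 2) him
  have hlo := blockScale_div_le_nthLargest hs hF hε (i := i) (by omega)
  rw [blockScale_succ, blockScale_succ] at hhi
  linarith [blockScale_pos m (i + 2)]

/-- Within block `j + 1` the prefix sums of `hardList` have second differences of order
`ε · blockMass`, which a `(1 ± ε)`-approximation can only follow by dropping somewhere. -/
lemma exists_drop_in_window (hF : PrefixApprox ε s m k) (hε : 0 < ε) {j : ℕ} (hjm : j < m)
    {Q h : ℕ} (hQh : Q + 2 * h ≤ 1024 ^ (j + 1)) (hh : 4 * √ε * 1024 ^ (j + 1) ≤ h) :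
    ∃ q ∈ Ico (blocksLen j + Q) (blocksLen j + Q + 2 * h),
      nthLargest s (q + 1) < nthLargest s q := by
  apply exists_drop_of_topP_lt
  have hconc := hardPrefix_add_hardPrefix k hjm hQh
  have hconcε := congrArg (ε * ·) hconc
  set a := blocksLen j + Q
  have hend : a + 2 * h ≤ blocksLen (j + 1) := by rw [blocksLen_succ]; omega
  have hlast := blocksLen_mono (show j + 1 ≤ m by omega)
  have f1 := (hF a (by omega)).2
  have f2 := (hF (a + h) (by omega)).1
  have f3 := (hF (a + 2 * h) (by omega)).2
  have hmid : hardPrefix m k (a + h) ≤ 8 / 3 * blockMass m (j + 1) := by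
    have := monotone_hardPrefix m k (show a + h ≤ blocksLen (j + 1) by omega)
    rw [hardPrefix_blocksLen k (by omega)] at this
    have : blockMass m (j + 2) = 4 * blockMass m (j + 1) := by unfold blockMass; ring
    linarith [sum_blocks_le m (j + 1)]
  have hgap : 16 * ε * blockMass m (j + 1) ≤ blockScale m (j + 1) * h ^ 2 / 1024 ^ (j + 1) := by
    have hsq : 16 * ε * ((1024 : ℝ) ^ (j + 1)) ^ 2 ≤ (h : ℝ) ^ 2 := by
      have := pow_le_pow_left₀ (by positivity) hh 2
      rwa [mul_pow, mul_pow, Real.sq_sqrt hε.le, show (4 : ℝ) ^ 2 = 16 by norm_num] at this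
    rw [le_div_iff₀ (by positivity), ← pow_mul_blockScale]
    nlinarith [blockScale_pos m (j + 1)]
  have hmidε := mul_le_mul_of_nonneg_left hmid hε.le
  have hgapε : 0 ≤ ε * (blockScale m (j + 1) * h ^ 2 / 1024 ^ (j + 1)) :=
    mul_nonneg hε.le (by have := blockScale_pos m (j + 1); positivity)
  linarith [mul_pos hε (blockMass_pos m (j + 1))]

lemma card_le_of_small_eps (hs : ∀ x ∈ s, 0 ≤ x) (hF : PrefixApprox ε s m k) (hε : 0 < ε)
    (hε1 : ε ≤ 1) {i : ℕ} (hgood : 1 ≤ ε * 1024 ^ (i + 1)) :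
    (m - i) * ⌊(√ε)⁻¹ / 10⌋₊ ≤ #s.toFinset := by
  set K := ⌊(√ε)⁻¹ / 10⌋₊
  let H (j : ℕ) := ⌈4 * √ε * 1024 ^ (j + 1)⌉₊
  have hfit : ∀ j ∈ Ico i m, 2 * H j * K ≤ 1024 ^ (j + 1) := by
    intro j hj
    have hεδ : ε ≤ √ε := by
      nlinarith [Real.sq_sqrt hε.le, Real.sqrt_le_one.mpr hε1, Real.sqrt_nonneg ε]
    have hpow : (1024 : ℝ) ^ (i + 1) ≤ 1024 ^ (j + 1) :=
      pow_le_pow_right₀ (by norm_num) (by simp only [mem_Ico] at hj; omega)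
    have := two_mul_floor_mul_ceil_le (Real.sqrt_pos.mpr hε) (t := 1024 ^ (j + 1))
      (by push_cast; exact hgood.trans (mul_le_mul hεδ hpow (by positivity) (Real.sqrt_nonneg ε)))
    push_cast at this
    linarith [mul_right_comm 2 K (H j)]
  calc (m - i) * K = #(Ico i m ×ˢ range K) := by simp
    _ ≤ #s.toFinset := card_le_card_toFinset_of_windows hs (pairwiseDisjoint_blockWindow hfit) ?_
  rintro ⟨j, r⟩ he
  simp only [mem_product, mem_Ico, mem_range] at he
  have := Nat.mul_le_mul_left (2 * H j) (show r + 1 ≤ K from he.2)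
  rw [mul_add_one] at this
  exact exists_drop_in_window hF hε he.1.2 (by linarith [hfit j (mem_Ico.mpr he.1)])
    (by push_cast; exact Nat.le_ceil _)

lemma card_le_of_large_eps (hs : ∀ x ∈ s, 0 ≤ x) (hF : PrefixApprox ε s m k) (hε : ε < 1 / 2) :
    m / 2 - 1 ≤ #s.toFinset := by
  let W (i : ℕ) := Ico (blocksLen (2 * i + 1)) (blocksLen (2 * i + 3))
  have hdisj : ((range (m / 2 - 1) : Finset ℕ) : Set ℕ).PairwiseDisjoint W := by
    intro i _ i' _ hne
    refine disjoint_left.mpr fun q hq hq' => ?_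
    simp only [W, mem_Ico] at hq hq'
    rcases Nat.lt_or_gt_of_ne hne with h | h
    · have := blocksLen_mono (show 2 * i + 3 ≤ 2 * i' + 1 by omega); omega
    · have := blocksLen_mono (show 2 * i' + 3 ≤ 2 * i + 1 by omega); omega
  calc m / 2 - 1 = #(range (m / 2 - 1)) := (card_range _).symm
    _ ≤ #s.toFinset := card_le_card_toFinset_of_windows hs hdisj fun i hi =>
        exists_drop_between_blocks hs hF hε (i := 2 * i) (by simp only [mem_range] at hi; omega)

lemma le_card_of_prefixApprox (hs : ∀ x ∈ s, 0 ≤ x) (hF : PrefixApprox ε s m k) (hε : 0 < ε)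
    (hε2 : ε < 1 / 2) (hm : 10 ≤ m) (hgood : 1 ≤ ε * 1024 ^ ((m + 1) / 3 + 1)) :
    (√ε)⁻¹ * (m + 2) / 160 ≤ #s.toFinset := by
  have hθ : 0 < (√ε)⁻¹ := inv_pos.mpr (Real.sqrt_pos.mpr hε)
  by_cases hsmall : ε ≤ 1 / 400
  · have h20 : 20 ≤ (√ε)⁻¹ := by
      rw [le_inv_comm₀ (by norm_num) (Real.sqrt_pos.mpr hε), Real.sqrt_le_left (by norm_num)]
      linarith
    have hK : (√ε)⁻¹ / 20 ≤ ⌊(√ε)⁻¹ / 10⌋₊ := by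
      linarith [Nat.lt_floor_add_one ((√ε)⁻¹ / 10)]
    have hblocks : ((2 * m - 1 : ℕ) : ℝ) / 3 ≤ (m - (m + 1) / 3 : ℕ) := by
      rw [div_le_iff₀ (by norm_num)]; exact_mod_cast (by omega : 2 * m - 1 ≤ (m - (m + 1) / 3) * 3)
    have hcount := card_le_of_small_eps hs hF hε (by linarith) hgood
    have : ((2 * m - 1 : ℕ) : ℝ) = 2 * m - 1 := by rw [Nat.cast_sub (by omega)]; push_cast; ring
    calc (√ε)⁻¹ * (m + 2) / 160 ≤ (2 * m - 1) / 3 * ((√ε)⁻¹ / 20) := by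
          nlinarith [show (10 : ℝ) ≤ m by exact_mod_cast hm]
      _ ≤ (m - (m + 1) / 3 : ℕ) * ⌊(√ε)⁻¹ / 10⌋₊ := by
          rw [← this]; gcongr
      _ ≤ #s.toFinset := by exact_mod_cast hcount
  · have h20 : (√ε)⁻¹ ≤ 20 := by
      rw [inv_le_comm₀ (Real.sqrt_pos.mpr hε) (by norm_num), Real.le_sqrt (by norm_num) hε.le]
      linarith
    have hhalf : ((m : ℝ) - 3) / 2 ≤ (m / 2 - 1 : ℕ) := by
      rw [div_le_iff₀ (by norm_num), sub_le_iff_le_add]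
      exact_mod_cast (by omega : m ≤ (m / 2 - 1) * 2 + 3)
    have hcount := card_le_of_large_eps hs hF hε2
    calc (√ε)⁻¹ * (m + 2) / 160 ≤ ((m : ℝ) - 3) / 2 := by
          nlinarith [show (10 : ℝ) ≤ m by exact_mod_cast hm]
      _ ≤ #s.toFinset := hhalf.trans (by exact_mod_cast hcount)

end Coreset

lemma one_lt_mul_of_rpow_neg_third_lt {x ε b : ℝ} (hx : 0 < x) (hε : x ^ (-(1 / 3 : ℝ)) < ε)
    (hxb : x ≤ b ^ 3) : 1 < ε * b := by
  have hb : 0 ≤ b := by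
    by_contra! hb
    nlinarith [sq_nonneg b]
  have hroot : x ^ (1 / 3 : ℝ) ≤ b := by
    calc x ^ (1 / 3 : ℝ) ≤ (b ^ 3) ^ (1 / 3 : ℝ) := Real.rpow_le_rpow hx.le hxb (by norm_num)
      _ = b := by simpa using Real.pow_rpow_inv_natCast hb (n := 3) (by norm_num)
  rw [Real.rpow_neg hx.le] at hε
  have hpos : 0 < x ^ (1 / 3 : ℝ) := Real.rpow_pos_of_pos hx _
  have := inv_pos.mpr hpos
  calc 1 = (x ^ (1 / 3 : ℝ))⁻¹ * x ^ (1 / 3 : ℝ) := (inv_mul_cancel₀ hpos.ne').symm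
    _ < ε * b := mul_lt_mul hε hroot hpos (by linarith)

lemma log_le_of_lt_pow {n m : ℕ} (hn : 0 < n) (hnm : n < 1024 ^ m) : Real.log n ≤ 7 * m := by
  have h1024 : Real.log 1024 ≤ 7 := by
    rw [show (1024 : ℝ) = 2 ^ 10 by norm_num, Real.log_pow]
    push_cast
    linarith [Real.log_two_lt_d9]
  calc Real.log n ≤ Real.log ((1024 : ℝ) ^ m) :=
        Real.log_le_log (by exact_mod_cast hn) (by exact_mod_cast hnm.le)
    _ = m * Real.log 1024 := Real.log_pow _ _
    _ ≤ 7 * m := by nlinarith [m.cast_nonneg (α := ℝ)]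

lemma exists_blocksLen_le {n : ℕ} (hn : 1024 ^ 12 ≤ n) :
    ∃ m, 10 ≤ m ∧ n < 1024 ^ (m + 2) ∧ blocksLen m ≤ n := by
  have hlog : 12 ≤ Nat.log 1024 n := (Nat.le_log_iff_pow_le (by norm_num) (by omega)).mpr hn
  refine ⟨Nat.log 1024 n - 1, by omega, ?_, ?_⟩
  · rw [show Nat.log 1024 n - 1 + 2 = Nat.log 1024 n + 1 by omega]
    exact Nat.lt_pow_succ_log_self (by norm_num) n
  · have := Nat.pow_log_le_self 1024 (show n ≠ 0 by positivity)
    rw [show Nat.log 1024 n = Nat.log 1024 n - 1 + 1 by omega] at this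
    linarith [mul_blocksLen_add_le_pow (Nat.log 1024 n - 1)]

theorem stmt_14 :
    ∃ c : ℝ, 0 < c ∧ ∃ N₀ : ℕ,
      ∀ n : ℕ, N₀ ≤ n →
      ∀ ε : ℝ, (n : ℝ) ^ (-(1 / 3 : ℝ)) < ε → ε < 1 / 2 →
      ∃ X : Finset ℝ, X.card = n ∧
        ∀ D : Multiset ℝ,
          (∀ p : ℕ, 1 ≤ p → p ≤ n → ∀ y : ℝ,
            cost1 p D y ∈ Set.Icc ((1 - ε) * cost1 p X.val y) ((1 + ε) * cost1 p X.val y)) →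
          c * ε ^ (-(1 / 2 : ℝ)) * Real.log n ≤ (D.toFinset.card : ℝ) := by
  refine ⟨1 / 1120, by norm_num, 1024 ^ 12, fun n hn ε hε hε2 => ?_⟩
  obtain ⟨m, hm, hnm, hmn⟩ := exists_blocksLen_le hn
  refine ⟨hardSet m (n - blocksLen m), by rw [card_hardSet]; omega, fun D hD => ?_⟩
  have hn0 : (0 : ℝ) < n := by positivity
  have hε0 : 0 < ε := (Real.rpow_pos_of_pos hn0 _).trans hε
  have hF : PrefixApprox ε (D.map abs) m (n - blocksLen m) :=
    prefixApprox_of_cost1 fun p hp1 hp => hD p hp1 (by omega) 0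
  have hgood : 1 ≤ ε * 1024 ^ ((m + 1) / 3 + 1) := by
    refine (one_lt_mul_of_rpow_neg_third_lt hn0 hε ?_).le
    rw [← pow_mul]; exact_mod_cast hnm.le.trans (Nat.pow_le_pow_right (by norm_num) (by omega))
  have hbound := le_card_of_prefixApprox (fun x hx => by
    obtain ⟨d, -, rfl⟩ := Multiset.mem_map.mp hx; exact abs_nonneg d) hF hε0 hε2 hm hgood
  have hD : #(D.map abs).toFinset ≤ #D.toFinset := by
    rw [Multiset.toFinset_map]; exact card_image_le
  rw [Real.rpow_neg hε0.le, ← Real.sqrt_eq_rpow]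
  calc 1 / 1120 * (√ε)⁻¹ * Real.log n ≤ (√ε)⁻¹ * (m + 2) / 160 := by
        have := log_le_of_lt_pow (by omega) hnm
        push_cast at this
        nlinarith [inv_pos.mpr (Real.sqrt_pos.mpr hε0)]
    _ ≤ #D.toFinset := hbound.trans (by exact_mod_cast hD)
end

section
/- Let ε ∈ (0,1/2), let F(x) := √x, and let g : ℝ → ℝ be a linear (affine) function. Then for every pair of integers a ≥ 1 and b ≥ (1 + 1/ε)² satisfying b/a ≥ (1 + 12√ε)⁴, there exists an integer p with a ≤ p ≤ b such that g(p) ∉ [(1−ε)·√p, (1+ε)·√p]. -/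
/-!
Suppose `g` stayed in the band on all of `[a, b]`. An affine function lying below `(1 + ε)√x` at
both endpoints lies below `(1 + ε)` times the chord of `√` there. At the integer `p ≈ √(ab)` that
chord is `2√(ab) / (√a + √b)`, while the band forces `g p ≥ (1 - ε)√p ≈ (1 - ε)√(ab)`. Since
`√b / √a ≥ (1 + 12√ε)²`, the gap between `√a + √b` and `2 (ab)^{1/4}` — the strict concavity of
`√` — beats the slack `O(ε)`, a contradiction.
-/

open Real

theorem affine_mul_le_sqrt_chord {k m C a b x : ℝ} (ha : 0 ≤ a) (hab : a < b)
    (hax : a ≤ x) (hxb : x ≤ b) (hga : k * a + m ≤ C * √a) (hgb : k * b + m ≤ C * √b) :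
    (√a + √b) * (k * x + m) ≤ C * (√a * √b + x) := by
  obtain ⟨s, hs, rfl⟩ : ∃ s, 0 ≤ s ∧ a = s ^ 2 := ⟨√a, sqrt_nonneg a, (sq_sqrt ha).symm⟩
  obtain ⟨t, ht, rfl⟩ : ∃ t, 0 ≤ t ∧ b = t ^ 2 :=
    ⟨√b, sqrt_nonneg b, (sq_sqrt (ha.trans hab.le)).symm⟩
  rw [sqrt_sq hs, sqrt_sq ht] at *
  have hst : s < t := (pow_lt_pow_iff_left₀ hs ht two_ne_zero).1 hab
  have interpolation : (t - s) * ((s + t) * (k * x + m)) =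
      (t ^ 2 - x) * (k * s ^ 2 + m) + (x - s ^ 2) * (k * t ^ 2 + m) := by ring
  refine le_of_mul_le_mul_left ?_ (sub_pos.2 hst)
  rw [interpolation]
  nlinarith [mul_le_mul_of_nonneg_left hga (sub_nonneg.2 hxb),
    mul_le_mul_of_nonneg_left hgb (sub_nonneg.2 hax)]

theorem two_add_mul_sqrt_mul_lt {w s t : ℝ} (hw : 0 < w) (hw2 : w ^ 2 < 1 / 2) (hs : 0 < s)
    (hst : (1 + 12 * w) ^ 2 * s ≤ t) :
    (2 + 3 * w ^ 2) * √(s * t) < (1 - w ^ 2) * (s + t) := by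
  obtain ⟨σ, hσ, rfl⟩ : ∃ σ, 0 < σ ∧ s = σ ^ 2 := ⟨√s, sqrt_pos.2 hs, (sq_sqrt hs.le).symm⟩
  obtain ⟨τ, hτ, rfl⟩ : ∃ τ, 0 ≤ τ ∧ t = τ ^ 2 :=
    ⟨√t, sqrt_nonneg t, (sq_sqrt ((by positivity : (0 : ℝ) ≤ _).trans hst)).symm⟩
  rw [← mul_pow, sqrt_sq (by positivity)]
  have hστ : (1 + 12 * w) * σ ≤ τ := by
    rw [← mul_pow] at hst
    exact (pow_le_pow_iff_left₀ (by positivity) hτ two_ne_zero).1 hst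
  set d := τ - σ with hd
  have hwσ : 12 * (w * σ) ≤ d := by linarith
  have hw1 : w < 1 := by nlinarith
  -- The right side minus the left side is `(1 - w²) d² - 5 w² σ τ` with `d = τ - σ ≥ 12 w σ`.
  have hd2 : 144 * (w * σ) ^ 2 ≤ d ^ 2 := by nlinarith
  have hwσd : 12 * (w * (w * σ) * d) ≤ d ^ 2 := by
    have hd0 : 0 ≤ d := le_trans (by positivity) hwσ
    nlinarith [mul_le_mul_of_nonneg_left hwσ (mul_nonneg hw.le hd0)]
  nlinarith [mul_pos hw hσ]

theorem one_add_mul_chord_lt {ε s t x : ℝ} (hε : ε ∈ Set.Ioo (0 : ℝ) (1 / 2)) (hs : 1 ≤ s)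
    (ht : 1 + 1 / ε ≤ t) (hst : (1 + 12 * √ε) ^ 2 * s ≤ t) (hx : s * t ≤ x)
    (hx' : x ≤ s * t + 1) :
    (1 + ε) * (s * t + x) < (1 - ε) * (s + t) * √x := by
  obtain ⟨hε0, hε1⟩ := hε
  have hε_sq : √ε ^ 2 = ε := sq_sqrt hε0.le
  have hslack : 1 + ε ≤ ε * (s * t) := by
    have : 1 + ε ≤ ε * t := by
      have := mul_le_mul_of_nonneg_left ht hε0.le
      rwa [mul_add, mul_one_div_cancel hε0.ne', mul_one, add_comm] at this
    nlinarith
  have hgap := two_add_mul_sqrt_mul_lt (sqrt_pos.2 hε0) (by rwa [hε_sq])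
    (by linarith : (0 : ℝ) < s) hst
  rw [hε_sq] at hgap
  have hpos : 0 < √(s * t) := sqrt_pos.2 (by nlinarith)
  calc (1 + ε) * (s * t + x) ≤ (2 + 3 * ε) * √(s * t) * √(s * t) := by
        rw [mul_assoc, mul_self_sqrt (by nlinarith)]; nlinarith
    _ < (1 - ε) * (s + t) * √(s * t) := mul_lt_mul_of_pos_right hgap hpos
    _ ≤ (1 - ε) * (s + t) * √x :=
        mul_le_mul_of_nonneg_left (sqrt_le_sqrt hx) (by nlinarith)

theorem exists_nat_sqrt_mul_sqrt_le {a b : ℕ} (hab : a ≤ b) :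
    ∃ p : ℕ, a ≤ p ∧ p ≤ b ∧ √a * √b ≤ p ∧ (p : ℝ) ≤ √a * √b + 1 := by
  have hab' : √(a : ℝ) ≤ √b := sqrt_le_sqrt (by exact_mod_cast hab)
  refine ⟨⌈√a * √b⌉₊, ?_, Nat.ceil_le.2 ?_, Nat.le_ceil _,
    (Nat.ceil_lt_add_one (by positivity)).le⟩
  · exact_mod_cast (mul_self_sqrt (Nat.cast_nonneg a)).symm.trans_le
      ((mul_le_mul_of_nonneg_left hab' (sqrt_nonneg _)).trans (Nat.le_ceil _))
  · exact (mul_le_mul_of_nonneg_right hab' (sqrt_nonneg _)).trans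
      (mul_self_sqrt (Nat.cast_nonneg b)).le

theorem stmt_15 (ε : ℝ) (hε : ε ∈ Set.Ioo (0 : ℝ) (1 / 2))
    (kc mc : ℝ) (g : ℝ → ℝ) (hg : ∀ x, g x = kc * x + mc)
    (a b : ℕ) (ha : 1 ≤ a) (hb : ((1 : ℝ) + 1 / ε) ^ 2 ≤ (b : ℝ))
    (hab : (1 + 12 * Real.sqrt ε) ^ 4 ≤ (b : ℝ) / (a : ℝ)) :
    ∃ p : ℕ, a ≤ p ∧ p ≤ b ∧
      g p ∉ Set.Icc ((1 - ε) * Real.sqrt p) ((1 + ε) * Real.sqrt p) := by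
  by_contra! hband
  have ha' : (1 : ℝ) ≤ a := by exact_mod_cast ha
  have hab' : (1 + 12 * √ε) ^ 4 * a ≤ b := (le_div_iff₀ (by positivity)).1 hab
  have hlt : (a : ℝ) < b := by
    have : 1 < (1 + 12 * √ε) ^ 4 := one_lt_pow₀ (by linarith [sqrt_pos.2 hε.1]) four_ne_zero
    nlinarith
  have hs : 1 ≤ √(a : ℝ) := one_le_sqrt.2 ha'
  have ht : 1 + 1 / ε ≤ √(b : ℝ) :=
    (le_sqrt (by linarith [one_div_pos.2 hε.1]) (by linarith)).2 hb
  have hst : (1 + 12 * √ε) ^ 2 * √(a : ℝ) ≤ √(b : ℝ) := by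
    rw [le_sqrt (by positivity) (by linarith), mul_pow, sq_sqrt (by linarith), ← pow_mul]
    exact hab'
  have hle : a ≤ b := by exact_mod_cast hlt.le
  obtain ⟨p, hap, hpb, hp, hp'⟩ := exists_nat_sqrt_mul_sqrt_le hle
  have hband' (q : ℕ) (haq : a ≤ q) (hqb : q ≤ b) := hg q ▸ hband q haq hqb
  have hchord := affine_mul_le_sqrt_chord (x := (p : ℝ)) (by positivity) hlt
    (by exact_mod_cast hap) (by exact_mod_cast hpb) (hband' a le_rfl hle).2 (hband' b hle le_rfl).2
  have hbelow := mul_le_mul_of_nonneg_left (hband' p hap hpb).1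
    (by positivity : (0 : ℝ) ≤ √a + √b)
  have hgap := one_add_mul_chord_lt hε hs ht hst hp hp'
  linarith
end
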